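/- Under the hypotheses of the main theorem, φ preserves the Peirce decomposition: if X ∈ 𝔄_{ij} = P_i𝔄P_j, then φ(X) ∈ 𝔄'_{ij} = Q_i𝔄'Q_j, where Q_i = φ(P_i), for all i,j ∈ {1,2}. -/
import Mathlib


/-- The *-Jordan product `{A,B}_* = AB + BA*`. -/
def jstar {R : Type*} [Ring R] [StarRing R] (A B : R) : R := A * B + B * star A

/-- The iterated *-Jordan product `q_{n*}(x_1, ..., x_n)`. -/
def qstar {R : Type*} [Ring R] [StarRing R] : List R → R
  | [] => 0
  | x :: xs => xs.foldl jstar x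

lemma jstar_nsmul_left {R : Type*} [Ring R] [StarRing R] (c : ℕ) (A B : R) :
    jstar (c • A) B = c • jstar A B := by
  simp only [jstar, smul_mul_assoc, star_nsmul, mul_smul_comm, smul_add]

lemma jstar_one_one {R : Type*} [Ring R] [StarRing R] :
    jstar (1:R) 1 = 2 • (1:R) := by
  simp only [jstar, one_mul, mul_one, star_one, two_nsmul]

lemma jstar_one_left {R : Type*} [Ring R] [StarRing R] (A : R) :
    jstar (1:R) A = 2 • A := by
  simp only [jstar, one_mul, mul_one, star_one, two_nsmul]

lemma foldl_ones {R : Type*} [Ring R] [StarRing R] (k : ℕ) :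
    (List.replicate k (1:R)).foldl jstar 1 = 2^k • (1:R) := by
  induction k with
  | zero => simp
  | succ k ih =>
    rw [List.replicate_succ', List.foldl_append, ih]
    simp only [List.foldl_cons, List.foldl_nil]
    rw [jstar_nsmul_left, jstar_one_one, smul_smul, ← pow_succ]

lemma qstar_ones {R : Type*} [Ring R] [StarRing R] (m : ℕ) (A B : R) :
    qstar (List.replicate m (1:R) ++ [A, B]) = 2^m • jstar A B := by
  cases m with
  | zero => simp [qstar]
  | succ k =>
    rw [List.replicate_succ]
    show (List.replicate k (1:R) ++ [A, B]).foldl jstar 1 = _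
    rw [List.foldl_append, foldl_ones]
    simp only [List.foldl_cons, List.foldl_nil]
    rw [jstar_nsmul_left, jstar_one_left, smul_smul, jstar_nsmul_left, ← pow_succ]

theorem stmt12 {𝔄 𝔄' : Type*} [CStarAlgebra 𝔄] [CStarAlgebra 𝔄']
    (n : ℕ) (hn : 2 ≤ n)
    (P₁ : 𝔄) (hproj : P₁ * P₁ = P₁) (hsa : star P₁ = P₁) (hne0 : P₁ ≠ 0) (hne1 : P₁ ≠ 1)
    (φ : 𝔄 → 𝔄') (hbij : Function.Bijective φ) (hunital : φ 1 = 1) (hadd : ∀ A B : 𝔄, φ (A + B) = φ A + φ B) (hstar : ∀ A : 𝔄, φ (star A) = star (φ A))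
    (hqI : ∀ A B : 𝔄, φ (qstar (List.replicate (n - 2) 1 ++ [A, B])) =
      qstar (List.replicate (n - 2) (φ 1) ++ [φ A, φ B]))
    (hqP : ∀ P ∈ ({P₁, 1 - P₁} : Set 𝔄), ∀ A B : 𝔄,
      φ (qstar (List.replicate (n - 2) P ++ [A, B])) =
      qstar (List.replicate (n - 2) (φ P) ++ [φ A, φ B])) :
    ∀ Pi ∈ ({P₁, 1 - P₁} : Set 𝔄), ∀ Pj ∈ ({P₁, 1 - P₁} : Set 𝔄), ∀ X : 𝔄,
      Pi * X * Pj = X → φ Pi * φ X * φ Pj = φ X := by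
  have hφ0 : φ 0 = 0 := by
    have h := hadd 0 0
    rw [add_zero] at h
    nth_rewrite 1 [← add_zero (φ 0)] at h
    exact (add_left_cancel h).symm
  have hφnsmul : ∀ (k : ℕ) (x : 𝔄), φ (k • x) = k • φ x := by
    intro k x
    induction k with
    | zero => simpa using hφ0
    | succ k ih => rw [succ_nsmul, hadd, ih, succ_nsmul]
  have hcancel : ∀ (k : ℕ), k ≠ 0 → ∀ y z : 𝔄', k • y = k • z → y = z := by
    intro k hk y z h
    have h' : (k : ℂ) • y = (k : ℂ) • z := by
      rw [Nat.cast_smul_eq_nsmul, Nat.cast_smul_eq_nsmul]; exact h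
    exact smul_right_injective 𝔄' (by exact_mod_cast hk) h'
  have hc2 : ∀ y z : 𝔄', y + y = z + z → y = z := by
    intro y z h
    refine hcancel 2 (by norm_num) y z ?_
    rw [two_nsmul, two_nsmul]; exact h
  have hkey : ∀ A B : 𝔄, φ (jstar A B) = jstar (φ A) (φ B) := by
    intro A B
    have h := hqI A B
    rw [hunital, qstar_ones, qstar_ones, hφnsmul] at h
    exact hcancel _ (pow_ne_zero _ two_ne_zero) _ _ h
  -- Q = φ P is an idempotent for any self-adjoint idempotent P
  have hQidem : ∀ P : 𝔄, P * P = P → star P = P → φ P * φ P = φ P := by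
    intro P hP2 hPs
    have hQs : star (φ P) = φ P := by rw [← hstar, hPs]
    have h' := hkey P P
    rw [jstar, jstar, hPs, hQs, hP2] at h'
    have h'' : φ P + φ P = φ P * φ P + φ P * φ P := by
      rw [← hadd]; exact h'
    exact (hc2 _ _ h'').symm
  -- diagonal Peirce case
  have hdiag : ∀ P : 𝔄, P * P = P → star P = P → ∀ X : 𝔄, P * X * P = X →
      φ P * φ X * φ P = φ X := by
    intro P hP2 hPs X hX
    have hQs : star (φ P) = φ P := by rw [← hstar, hPs]
    have hQ2 := hQidem P hP2 hPs
    have hPX : P * X = X := by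
      conv_lhs => rw [← hX]
      rw [← mul_assoc, ← mul_assoc, hP2, hX]
    have hXP : X * P = X := by
      conv_lhs => rw [← hX]
      rw [mul_assoc, hP2, hX]
    have e1 : φ X + φ X = φ P * φ X + φ X * φ P := by
      have h := hkey P X
      rw [jstar, jstar, hPs, hQs, hPX, hXP, hadd] at h
      exact h
    have e2 : φ P * φ X = φ P * φ X * φ P := by
      have h := congrArg (fun t => φ P * t) e1
      simp only [mul_add, ← mul_assoc] at h
      rw [hQ2] at h
      exact add_left_cancel h
    have e3 : φ X * φ P = φ P * φ X * φ P := by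
      have h := congrArg (fun t => t * φ P) e1
      simp only [add_mul] at h
      rw [mul_assoc (φ X), hQ2] at h
      exact add_right_cancel h
    have h4 : φ X + φ X = φ P * φ X * φ P + φ P * φ X * φ P := by
      conv_lhs => rw [e1, e2, e3]
    exact (hc2 _ _ h4).symm
  -- off-diagonal Peirce case
  have hoff : ∀ P : 𝔄, P * P = P → star P = P → ∀ X : 𝔄, P * X * (1 - P) = X →
      φ P * φ X * φ (1 - P) = φ X := by
    intro P hP2 hPs X hX
    have hQs : star (φ P) = φ P := by rw [← hstar, hPs]
    have hQ2 := hQidem P hP2 hPs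
    have hQ1 : φ (1 - P) = 1 - φ P := by
      have h := hadd P (1 - P)
      rw [show P + (1 - P) = 1 by abel, hunital] at h
      rw [eq_sub_iff_add_eq, add_comm]; exact h.symm
    have hPX : P * X = X := by
      conv_lhs => rw [← hX]
      rw [← mul_assoc, ← mul_assoc, hP2, hX]
    have hXP : X * P = 0 := by
      conv_lhs => rw [← hX]
      rw [mul_assoc, mul_assoc, sub_mul, one_mul, hP2, sub_self, mul_zero, mul_zero]
    have hsX : star X = (1 - P) * star X * P := by
      conv_lhs => rw [← hX]
      rw [star_mul, star_mul, star_sub, star_one, hPs, mul_assoc]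
    have hPsX : P * star X = 0 := by
      rw [hsX, ← mul_assoc, ← mul_assoc, mul_sub, mul_one, hP2, sub_self, zero_mul, zero_mul]
    have e1 : φ X = φ P * φ X + φ X * φ P := by
      have h := hkey P X
      rw [jstar, jstar, hPs, hQs, hPX, hXP, add_zero] at h
      exact h
    have e3 : φ P * φ X * φ P = 0 := by
      have h := congrArg (fun t => φ P * t) e1
      simp only [mul_add, ← mul_assoc] at h
      rw [hQ2] at h
      nth_rewrite 1 [← add_zero (φ P * φ X)] at h
      exact (add_left_cancel h).symm
    have e2 : φ X * φ P + φ P * star (φ X) = 0 := by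
      have h := hkey X P
      rw [jstar, jstar, hXP, hPsX, add_zero, hφ0] at h
      exact h.symm
    have hWs : star (φ X * φ P) = -(φ X * φ P) := by
      have h1 : star (φ X * φ P) = φ P * star (φ X) := by rw [star_mul, hQs]
      rw [h1]
      exact eq_neg_of_add_eq_zero_right e2
    have hW2 : (φ X * φ P) * (φ X * φ P) = 0 := by
      have h' : (φ X * φ P) * (φ X * φ P) = φ X * (φ P * φ X * φ P) := by
        rw [mul_assoc, ← mul_assoc (φ P)]
      rw [h', e3, mul_zero]
    have hW0 : φ X * φ P = 0 := by
      have hnorm : ‖star (φ X * φ P) * (φ X * φ P)‖ = ‖φ X * φ P‖ * ‖φ X * φ P‖ :=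
        CStarRing.norm_star_mul_self
      rw [hWs, neg_mul, hW2, neg_zero, norm_zero] at hnorm
      exact norm_eq_zero.mp (mul_self_eq_zero.mp hnorm.symm)
    rw [hQ1, mul_sub, mul_one, e3, sub_zero]
    rw [hW0, add_zero] at e1
    exact e1.symm
  -- case analysis
  intro Pi hPi Pj hPj X hX
  have h2proj : (1 - P₁) * (1 - P₁) = 1 - P₁ := by
    rw [sub_mul, one_mul, mul_sub, mul_one, hproj, sub_self, sub_zero]
  have h2sa : star (1 - P₁) = 1 - P₁ := by rw [star_sub, star_one, hsa]
  simp only [Set.mem_insert_iff, Set.mem_singleton_iff] at hPi hPj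
  rcases hPi with hPi | hPi <;> rcases hPj with hPj | hPj <;> rw [hPi, hPj] at hX ⊢
  · exact hdiag P₁ hproj hsa X hX
  · exact hoff P₁ hproj hsa X hX
  · have h := hoff (1 - P₁) h2proj h2sa X (by rw [sub_sub_cancel]; exact hX)
    rwa [sub_sub_cancel] at h
  · exact hdiag (1 - P₁) h2proj h2sa X hX
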